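/- arXiv:1208.5027 — 6 statements merged into one kernel-verified Lean document; each statement's English description precedes it below -/
import Mathlib

section
/- Let U ⊆ ℂ be a nonempty connected open set and I ⊆ ℝ a nonempty open interval. Let ζ : U × I → ℂ be holomorphic in a and differentiable in u. If for all (a,u) ∈ U × I both partial derivatives are purely imaginary, i.e. ∂ζ/∂a(a,u) + conj(∂ζ/∂a(a,u)) = 0 and ∂ζ/∂u(a,u) + conj(∂ζ/∂u(a,u)) = 0, then there exist real constants C₀ and C₁ and a differentiable function G : I → ℝ such that ζ(a,u) = i·(C₀·a + G(u)) + C₁ for all (a,u) ∈ U × I. -/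
/-!
For fixed `u`, `a ↦ ζ(a,u)` is holomorphic with purely imaginary derivative; by the open mapping
theorem that derivative is a constant `i k(u)`, so `ζ(a,u) = i k(u) a + b(u)`. Since `∂ζ/∂u` is
purely imaginary, `Re ζ(a,u)` does not depend on `u`; comparing two points `a` with different
imaginary parts shows that `k(u)` does not depend on `u` either.
-/

open Complex Set

theorem Complex.exists_eq_ofReal_mul_I_mul_add_of_re_deriv_eq_zero {f : ℂ → ℂ} {U : Set ℂ}
    (hf : DifferentiableOn ℂ f U) (hUopen : IsOpen U) (hUconn : IsConnected U)
    (hre : ∀ z ∈ U, (deriv f z).re = 0) :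
    ∃ (k : ℝ) (b : ℂ), ∀ z ∈ U, f z = k * I * z + b := by
  have hderiv : AnalyticOnNhd ℂ (deriv f) U := (hf.analyticOnNhd hUopen).deriv
  obtain ⟨k, hk⟩ := hderiv.eq_re_add_const_mul_I_of_re_eq_const hre hUopen hUconn
  obtain ⟨b, hb⟩ := hUopen.exists_eq_add_of_deriv_eq hUconn.isPreconnected hf
    (differentiableOn_id.const_mul (k * I)) fun z hz => by simp [hk z hz, mul_comm]
  exact ⟨k, b, hb⟩

theorem IsOpen.re_eq_of_hasDerivAt_of_re_eq_zero {g g' : ℝ → ℂ} {s : Set ℝ}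
    (hs : IsOpen s) (hs' : IsPreconnected s) (hg : ∀ t ∈ s, HasDerivAt g (g' t) t)
    (hre : ∀ t ∈ s, (g' t).re = 0) {x y : ℝ} (hx : x ∈ s) (hy : y ∈ s) :
    (g x).re = (g y).re := by
  have hgre : ∀ t ∈ s, HasDerivAt (fun t => (g t).re) 0 t := fun t ht => by
    have h := reCLM.hasFDerivAt.comp_hasDerivAt t (hg t ht)
    rwa [reCLM_apply, hre t ht] at h
  exact hs.is_const_of_deriv_eq_zero hs'
    (fun t ht => (hgre t ht).differentiableAt.differentiableWithinAt)
    (fun t ht => (hgre t ht).deriv) hx hy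

theorem IsOpen.exists_mem_im_ne {U : Set ℂ} (hU : IsOpen U) {z : ℂ} (hz : z ∈ U) :
    ∃ w ∈ U, w.im ≠ z.im := by
  by_contra! h
  have : U ⊆ interior (im ⁻¹' {z.im}) := interior_maximal h hU
  rw [interior_preimage_im, interior_singleton, preimage_empty] at this
  exact this hz

/-- If `ζ(a,u)` is holomorphic in `a` and differentiable in `u` on a nonempty connected
open set `U ⊆ ℂ` times a nonempty open interval `I ⊆ ℝ`, and both partial derivatives
are purely imaginary, then `ζ(a,u) = i(C₀ a + G(u)) + C₁`. -/
theorem stmt_0 (U : Set ℂ) (I : Set ℝ) (hUopen : IsOpen U) (hUconn : IsConnected U)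
    (hIopen : IsOpen I) (hIne : I.Nonempty) (hIint : I.OrdConnected)
    (ζ ζa ζu : ℂ → ℝ → ℂ)
    (hζa : ∀ a ∈ U, ∀ u ∈ I, HasDerivAt (fun z => ζ z u) (ζa a u) a)
    (hζu : ∀ a ∈ U, ∀ u ∈ I, HasDerivAt (fun t => ζ a t) (ζu a u) u)
    (him_a : ∀ a ∈ U, ∀ u ∈ I, ζa a u + (starRingEnd ℂ) (ζa a u) = 0)
    (him_u : ∀ a ∈ U, ∀ u ∈ I, ζu a u + (starRingEnd ℂ) (ζu a u) = 0) :
    ∃ (C₀ C₁ : ℝ) (G : ℝ → ℝ), (∀ u ∈ I, DifferentiableAt ℝ G u) ∧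
      ∀ a ∈ U, ∀ u ∈ I, ζ a u = Complex.I * ((C₀ : ℂ) * a + (G u : ℂ)) + (C₁ : ℂ) := by
  have re_eq_zero {w : ℂ} (hw : w + (starRingEnd ℂ) w = 0) : w.re = 0 := by
    simpa using congrArg re hw
  obtain ⟨a₀, ha₀⟩ := hUconn.nonempty
  obtain ⟨u₀, hu₀⟩ := hIne
  obtain ⟨a₁, ha₁, ha₁im⟩ := hUopen.exists_mem_im_ne ha₀
  have affine_in_a : ∀ u ∈ I, ∃ (k : ℝ) (b : ℂ), ∀ a ∈ U, ζ a u = k * Complex.I * a + b :=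
    fun u hu => exists_eq_ofReal_mul_I_mul_add_of_re_deriv_eq_zero
        (fun a ha => (hζa a ha u hu).differentiableAt.differentiableWithinAt) hUopen hUconn
        fun a ha => (hζa a ha u hu).deriv ▸ re_eq_zero (him_a a ha u hu)
  choose! k b hkb using affine_in_a
  have re_const : ∀ a ∈ U, ∀ u ∈ I, (ζ a u).re = (ζ a u₀).re := fun a ha u hu =>
    hIopen.re_eq_of_hasDerivAt_of_re_eq_zero hIint.isPreconnected (hζu a ha)
      (fun t ht => re_eq_zero (him_u a ha t ht)) hu hu₀
  -- `Re ζ(a₁,u) - Re ζ(a₀,u) = -k(u) (Im a₁ - Im a₀)`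
  have k_const : ∀ u ∈ I, k u = k u₀ := fun u hu => by
    have h := congrArg₂ (· - ·) (re_const a₁ ha₁ u hu) (re_const a₀ ha₀ u hu)
    simp only [hkb u hu _ ha₁, hkb u hu _ ha₀, hkb u₀ hu₀ _ ha₁, hkb u₀ hu₀ _ ha₀] at h
    simp only [add_re, mul_re, mul_im, ofReal_re, ofReal_im, I_re, I_im] at h
    exact mul_right_cancel₀ (sub_ne_zero.mpr ha₁im) (by linarith)
  refine ⟨k u₀, (ζ a₀ u₀).re + k u₀ * a₀.im, fun u => (ζ a₀ u).im - k u₀ * a₀.re,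
    fun u hu => ?_, fun a ha u hu => ?_⟩
  · exact (imCLM.differentiableAt.comp u (hζu a₀ ha₀ u hu).differentiableAt).sub_const _
  · have hb : b u = ζ a₀ u - k u₀ * Complex.I * a₀ := by
      rw [hkb u hu a₀ ha₀, k_const u hu]; ring
    rw [hkb u hu a ha, k_const u hu, hb]
    apply Complex.ext <;> simp [← re_const a₀ ha₀ u hu]
end

section
/- Let C₀, C₁ ∈ ℝ with C₀ ≠ 0. For a ∈ ℂ define M(a) = i·C₀·(a − conj a) + 2·C₁ (which is real-valued), and on the set where M(a) ≠ 0 define τ(a) = −exp(conj a − a)/M(a) and α(a) = conj(τ(a))/4 + (i/C₀)·exp(a − conj a). Then there is no nonempty open set U ⊆ {a ∈ ℂ : M(a) ≠ 0} such that |α(a)| = (5/4)·|τ(a)| for all a ∈ U. -/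
open Complex ComplexConjugate Topology

/-!
On `{M ≠ 0}` the number `M a` is the nonzero real `m = 2C₁ - 2C₀ Im a`, so `|τ| = 1/|m|` and
`α = e^{a-ā} (-1/(4m) + i/C₀)` with `|e^{a-ā}| = 1`. Hence `|α| = (5/4)|τ|` forces `2m² = 3C₀²`,
which confines `a` to two horizontal lines; these contain no nonempty open set.
-/

lemma norm_exp_sub_conj (z : ℂ) : ‖exp (z - conj z)‖ = 1 := by
  simp [norm_exp]

lemma finite_setOf_sq_sub_mul_eq (p : ℝ) {q : ℝ} (hq : q ≠ 0) (c : ℝ) :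
    {y : ℝ | (p - q * y) ^ 2 = c}.Finite := by
  refine ((Set.toFinite {√c, -√c}).image fun s => (p - s) / q).subset fun y hy => ?_
  have habs : |p - q * y| = √c := by rw [← hy, Real.sqrt_sq_eq_abs]
  refine ⟨p - q * y, ?_, by field_simp; ring⟩
  rw [Set.mem_insert_iff, Set.mem_singleton_iff]
  rcases abs_choice (p - q * y) with h | h
  · left; linarith
  · right; linarith

lemma not_forall_sq_sub_mul_im_eq {U : Set ℂ} (hU : IsOpen U) (hne : U.Nonempty) (p : ℝ) {q : ℝ}
    (hq : q ≠ 0) (c : ℝ) : ¬ ∀ a ∈ U, (p - q * a.im) ^ 2 = c := by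
  intro h
  obtain ⟨a₀, ha₀⟩ := hne
  have hnhds : im '' U ∈ 𝓝 a₀.im := (isOpenMap_im U hU).mem_nhds ⟨a₀, ha₀, rfl⟩
  refine infinite_of_mem_nhds a₀.im hnhds ((finite_setOf_sq_sub_mul_eq p hq c).subset ?_)
  rintro _ ⟨a, ha, rfl⟩
  exact h a ha

lemma two_mul_sq_eq_of_norm_eq {C₀ m : ℝ} (hm : m ≠ 0) (a : ℂ)
    (h : ‖conj (-exp (conj a - a) / m) / 4 + I / C₀ * exp (a - conj a)‖
      = 5 / 4 * ‖-exp (conj a - a) / m‖) :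
    2 * m ^ 2 = 3 * C₀ ^ 2 := by
  have hconj : conj (-exp (conj a - a) / m) / 4 + I / C₀ * exp (a - conj a)
      = exp (a - conj a) * ((-(4 * m)⁻¹ : ℝ) + (C₀⁻¹ : ℝ) * I) := by
    rw [map_div₀, map_neg, ← exp_conj]
    push_cast
    simp only [map_sub, conj_conj, conj_ofReal]
    ring
  have hτ : ‖-exp (conj a - a) / m‖ = |m|⁻¹ := by
    have := norm_exp_sub_conj (conj a)
    rw [conj_conj] at this
    rw [norm_div, norm_neg, this, norm_real, Real.norm_eq_abs, one_div]
  rw [hconj, norm_mul, norm_exp_sub_conj, one_mul, norm_add_mul_I, hτ] at h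
  have h2 := congrArg (· ^ 2) h
  rw [Real.sq_sqrt (by positivity)] at h2
  simp only [mul_pow, inv_pow, sq_abs] at h2
  by_cases hC₀ : C₀ = 0
  · subst hC₀
    field_simp at h2
    norm_num at h2
  · field_simp at h2
    linarith

/-- With `M(a) = iC₀(a - ā) + 2C₁`, `τ(a) = -e^{ā-a}/M(a)` and
`α(a) = τ̄/4 + (i/C₀)e^{a-ā}`, there is no nonempty open subset of `{M ≠ 0}`
on which `|α| = (5/4)|τ|`. -/
theorem stmt_2 (C₀ C₁ : ℝ) (hC₀ : C₀ ≠ 0) (M τ α : ℂ → ℂ)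
    (hM : ∀ a : ℂ, M a = Complex.I * (C₀ : ℂ) * (a - (starRingEnd ℂ) a) + 2 * (C₁ : ℂ))
    (hτ : ∀ a : ℂ, M a ≠ 0 → τ a = -Complex.exp ((starRingEnd ℂ) a - a) / M a)
    (hα : ∀ a : ℂ, M a ≠ 0 →
      α a = (starRingEnd ℂ) (τ a) / 4 + (Complex.I / (C₀ : ℂ)) * Complex.exp (a - (starRingEnd ℂ) a)) :
    ¬ ∃ U : Set ℂ, IsOpen U ∧ U.Nonempty ∧ U ⊆ {a : ℂ | M a ≠ 0} ∧
      ∀ a ∈ U, ‖α a‖ = (5/4) * ‖τ a‖ := by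
  rintro ⟨U, hU, hne, hUM, hnorm⟩
  have hM_ofReal : ∀ a, M a = ((2 * C₁ - 2 * C₀ * a.im : ℝ) : ℂ) := fun a => by
    rw [hM, sub_conj]
    push_cast
    linear_combination (2 * C₀ * a.im : ℂ) * I_sq
  refine not_forall_sq_sub_mul_im_eq hU hne (2 * C₁) (mul_ne_zero two_ne_zero hC₀)
    (3 / 2 * C₀ ^ 2) fun a ha => ?_
  have hMa : M a ≠ 0 := hUM ha
  have hm : 2 * C₁ - 2 * C₀ * a.im ≠ 0 := by
    rw [hM_ofReal] at hMa
    exact_mod_cast hMa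
  have h := hnorm a ha
  rw [hα a hMa, hτ a hMa, hM_ofReal] at h
  linarith [two_mul_sq_eq_of_norm_eq hm a h]
end

section
/- Let U ⊆ ℂ be a nonempty connected open set and let ζ : U → ℂ be holomorphic with ζ'(a) ≠ 0 for all a ∈ U. Then for every θ ∈ ℝ it is not the case that ((1 + 5·exp(i·θ))/4)·conj(ζ'(a)) = ζ(a) + conj(ζ(a)) for all a ∈ U. -/
/-!
Conjugating the identity gives `conj c · ζ' = 2 Re ζ` on `U`, a real-valued holomorphic function,
hence constant on the connected set `U` by the Cauchy–Riemann equations. So `Re ζ` is constant,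
and Cauchy–Riemann once more forces `ζ' = 0`.
-/

open Complex Filter Topology

theorem Complex.eq_zero_of_hasDerivAt_of_re_eventuallyEq_const {f : ℂ → ℂ} {f' a : ℂ} {r : ℝ}
    (hf : HasDerivAt f f' a) (hre : (fun z => (f z).re) =ᶠ[𝓝 a] fun _ => r) : f' = 0 := by
  have hzero : reCLM.comp ((ContinuousLinearMap.toSpanSingleton ℂ f').restrictScalars ℝ) = 0 :=
    (reCLM.hasFDerivAt.comp a (hf.hasFDerivAt.restrictScalars ℝ)).unique
      ((hasFDerivAt_const r a).congr_of_eventuallyEq hre)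
  have h1 := congrArg (· 1) hzero
  have hI := congrArg (· I) hzero
  simp only [ContinuousLinearMap.comp_apply, ContinuousLinearMap.coe_restrictScalars',
    ContinuousLinearMap.toSpanSingleton_apply, smul_eq_mul, one_mul, reCLM_apply, zero_apply,
    mul_re, I_re, zero_mul, I_im, zero_sub, neg_eq_zero] at h1 hI
  exact Complex.ext h1 hI

theorem Complex.eq_zero_of_hasDerivAt_of_im_eventuallyEq_const {f : ℂ → ℂ} {f' a : ℂ} {r : ℝ}
    (hf : HasDerivAt f f' a) (him : (fun z => (f z).im) =ᶠ[𝓝 a] fun _ => r) : f' = 0 := by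
  have := eq_zero_of_hasDerivAt_of_re_eventuallyEq_const (hf.const_mul (-I)) (r := r)
    (by simpa using him)
  simpa using this

theorem IsOpen.differentiableOn_of_forall_hasDerivAt {U : Set ℂ} (hU : IsOpen U) {f f' : ℂ → ℂ}
    (hf : ∀ a ∈ U, HasDerivAt f (f' a) a) : DifferentiableOn ℂ f' U := by
  have hderiv : DifferentiableOn ℂ (deriv f) U :=
    (DifferentiableOn.analyticOnNhd (fun a ha => (hf a ha).differentiableAt.differentiableWithinAt)
      hU).deriv.differentiableOn
  exact hderiv.congr fun a ha => (hf a ha).deriv.symm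

theorem IsOpen.exists_eq_const_of_im_eq_zero {U : Set ℂ} (hU : IsOpen U) (hU' : IsPreconnected U)
    {g : ℂ → ℂ} (hg : DifferentiableOn ℂ g U) (him : ∀ z ∈ U, (g z).im = 0) :
    ∃ w, ∀ z ∈ U, g z = w :=
  hU.exists_is_const_of_deriv_eq_zero hU' hg fun _ hz =>
    eq_zero_of_hasDerivAt_of_im_eventuallyEq_const (r := 0)
      (hg.differentiableAt (hU.mem_nhds hz)).hasDerivAt
      (eventually_of_mem (hU.mem_nhds hz) him)

theorem not_forall_mul_conj_deriv_eq_add_conj {U : Set ℂ} (hUopen : IsOpen U)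
    (hUconn : IsConnected U) {ζ ζ' : ℂ → ℂ} (hζ : ∀ a ∈ U, HasDerivAt ζ (ζ' a) a)
    (hζ' : ∀ a ∈ U, ζ' a ≠ 0) (c : ℂ) :
    ¬ ∀ a ∈ U, c * starRingEnd ℂ (ζ' a) = ζ a + starRingEnd ℂ (ζ a) := by
  intro heq
  have hreal : ∀ a ∈ U, starRingEnd ℂ c * ζ' a = 2 * (ζ a).re := by
    intro a ha
    simpa [add_comm, Complex.add_conj, map_ofNat] using congrArg (starRingEnd ℂ) (heq a ha)
  obtain ⟨w, hw⟩ := hUopen.exists_eq_const_of_im_eq_zero hUconn.isPreconnected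
    ((hUopen.differentiableOn_of_forall_hasDerivAt hζ).const_mul (starRingEnd ℂ c))
    fun a ha => by simp [hreal a ha]
  obtain ⟨a₀, ha₀⟩ := hUconn.nonempty
  have hre : ∀ a ∈ U, (ζ a).re = w.re / 2 := fun a ha => by
    have := congrArg re ((hreal a ha).symm.trans (hw a ha))
    simp only [mul_re, re_ofNat, ofReal_re, im_ofNat, ofReal_im, mul_zero, sub_zero] at this
    linarith
  exact hζ' a₀ ha₀ (eq_zero_of_hasDerivAt_of_re_eventuallyEq_const (hζ a₀ ha₀)
    (eventually_of_mem (hUopen.mem_nhds ha₀) hre))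

/-- If `ζ` is holomorphic on a nonempty connected open `U ⊆ ℂ` with nonvanishing
derivative, then for no `θ ∈ ℝ` does `((1 + 5e^{iθ})/4)·conj(ζ'(a)) = ζ(a) + conj(ζ(a))`
hold on all of `U`. -/
theorem stmt_3 (U : Set ℂ) (hUopen : IsOpen U) (hUconn : IsConnected U)
    (ζ ζ' : ℂ → ℂ)
    (hζ : ∀ a ∈ U, HasDerivAt ζ (ζ' a) a)
    (hζ' : ∀ a ∈ U, ζ' a ≠ 0) :
    ∀ θ : ℝ, ¬ (∀ a ∈ U,
      ((1 + 5 * Complex.exp (Complex.I * (θ : ℂ))) / 4) * (starRingEnd ℂ) (ζ' a)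
        = ζ a + (starRingEnd ℂ) (ζ a)) :=
  fun _ => not_forall_mul_conj_deriv_eq_add_conj hUopen hUconn hζ hζ' _
end

section
/- Let U ⊆ ℂ be a nonempty connected open set and I ⊆ ℝ a nonempty open interval. Let ζ : U × I → ℂ be holomorphic in a and differentiable in u, such that for each a ∈ U the map u ↦ ∂ζ/∂a(a,u) is differentiable. If ∂/∂u(∂ζ/∂a)(a,u) = 0 for all (a,u) ∈ U × I and ∂ζ/∂u(a,u) + conj(∂ζ/∂u(a,u)) = 0 for all (a,u) ∈ U × I, then there exist a holomorphic function Z : U → ℂ, a differentiable function F₃ : I → ℝ, and a real constant C such that ζ(a,u) = Z(a) + i·F₃(u) + C for all (a,u) ∈ U × I. -/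
open Complex

/-!
Since `∂ζ/∂a` does not depend on `u`, for each `u` the function `a ↦ ζ(a,u) - ζ(a,u₀)` has zero
derivative on the connected set `U`, so `ζ(a,u) = ζ(a,u₀) - ζ(a₀,u₀) + ζ(a₀,u)`. The condition
`ζ_u + conj ζ_u = 0` says `Re ζ_u = 0`, so `Re ζ(a₀,u)` is constant on the interval `I` and
`ζ(a₀,u) = C + i Im ζ(a₀,u)`.
-/

section

variable {𝕜 G : Type*} [RCLike 𝕜] [NormedAddCommGroup G] [NormedSpace 𝕜 G] {s : Set 𝕜}

theorem IsOpen.is_const_of_hasDerivAt_zero (hs : IsOpen s) (hs' : IsPreconnected s)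
    {f : 𝕜 → G} (hf : ∀ x ∈ s, HasDerivAt f 0 x) {x y : 𝕜} (hx : x ∈ s) (hy : y ∈ s) :
    f x = f y :=
  hs.is_const_of_deriv_eq_zero hs' (fun z hz => (hf z hz).differentiableAt.differentiableWithinAt)
    (fun z hz => (hf z hz).deriv) hx hy

theorem IsOpen.sub_eq_sub_of_hasDerivAt_eq (hs : IsOpen s) (hs' : IsPreconnected s)
    {f g : 𝕜 → G} {f' : 𝕜 → G} (hf : ∀ x ∈ s, HasDerivAt f (f' x) x)
    (hg : ∀ x ∈ s, HasDerivAt g (f' x) x) {x y : 𝕜} (hx : x ∈ s) (hy : y ∈ s) :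
    f x - g x = f y - g y :=
  hs.is_const_of_hasDerivAt_zero hs' (fun z hz => by simpa using (hf z hz).sub (hg z hz)) hx hy

end

theorem HasDerivAt.complex_re {f : ℝ → ℂ} {f' : ℂ} {x : ℝ} (hf : HasDerivAt f f' x) :
    HasDerivAt (fun t => (f t).re) f'.re x :=
  reCLM.hasFDerivAt.comp_hasDerivAt x hf

theorem Complex.re_eq_zero_of_add_conj_eq_zero {z : ℂ} (h : z + (starRingEnd ℂ) z = 0) :
    z.re = 0 := by
  rw [add_conj] at h
  have h' : 2 * z.re = 0 := by exact_mod_cast h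
  linarith

/-- Case 3 of Lemma 4: if `ζ_{,au} = 0` and `ζ_{,u} + conj(ζ_{,u}) = 0` on `U × I`,
then `ζ(a,u) = Z(a) + iF₃(u) + C` with `Z` holomorphic on `U` and `F₃` real differentiable. -/
theorem stmt_6 (U : Set ℂ) (I : Set ℝ) (hUopen : IsOpen U) (hUconn : IsConnected U)
    (hIopen : IsOpen I) (hIne : I.Nonempty) (hIint : I.OrdConnected)
    (ζ ζa ζu ζau : ℂ → ℝ → ℂ)
    (hζa : ∀ a ∈ U, ∀ u ∈ I, HasDerivAt (fun z => ζ z u) (ζa a u) a)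
    (hζu : ∀ a ∈ U, ∀ u ∈ I, HasDerivAt (fun t => ζ a t) (ζu a u) u)
    (hζau : ∀ a ∈ U, ∀ u ∈ I, HasDerivAt (fun t => ζa a t) (ζau a u) u)
    (h1 : ∀ a ∈ U, ∀ u ∈ I, ζau a u = 0)
    (h2 : ∀ a ∈ U, ∀ u ∈ I, ζu a u + (starRingEnd ℂ) (ζu a u) = 0) :
    ∃ (Z : ℂ → ℂ), (∀ a ∈ U, DifferentiableAt ℂ Z a) ∧
      ∃ (F₃ : ℝ → ℝ), (∀ u ∈ I, DifferentiableAt ℝ F₃ u) ∧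
        ∃ (C : ℝ), ∀ a ∈ U, ∀ u ∈ I, ζ a u = Z a + Complex.I * (F₃ u : ℂ) + (C : ℂ) := by
  obtain ⟨u₀, hu₀⟩ := hIne
  obtain ⟨a₀, ha₀⟩ := hUconn.nonempty
  have hζa_indep : ∀ a ∈ U, ∀ u ∈ I, ζa a u = ζa a u₀ := fun a ha u hu =>
    hIopen.is_const_of_hasDerivAt_zero hIint.isPreconnected
      (fun t ht => h1 a ha t ht ▸ hζau a ha t ht) hu hu₀
  have hsplit : ∀ a ∈ U, ∀ u ∈ I, ζ a u - ζ a u₀ = ζ a₀ u - ζ a₀ u₀ := fun a ha u hu =>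
    hUopen.sub_eq_sub_of_hasDerivAt_eq hUconn.isPreconnected
      (fun b hb => hζa b hb u hu) (fun b hb => hζa_indep b hb u hu ▸ hζa b hb u₀ hu₀) ha ha₀
  have hre : ∀ u ∈ I, (ζ a₀ u).re = (ζ a₀ u₀).re := fun u hu =>
    hIopen.is_const_of_hasDerivAt_zero hIint.isPreconnected
      (fun t ht => re_eq_zero_of_add_conj_eq_zero (h2 a₀ ha₀ t ht) ▸ (hζu a₀ ha₀ t ht).complex_re)
      hu hu₀
  refine ⟨fun a => ζ a u₀ - ζ a₀ u₀, fun a ha => (hζa a ha u₀ hu₀).differentiableAt.sub_const _,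
    fun u => (ζ a₀ u).im, fun u hu =>
      differentiable_im.differentiableAt.comp u (hζu a₀ ha₀ u hu).differentiableAt,
    (ζ a₀ u₀).re, fun a ha u hu => ?_⟩
  calc ζ a u = ζ a u₀ - ζ a₀ u₀ + ζ a₀ u := by linear_combination hsplit a ha u hu
    _ = ζ a u₀ - ζ a₀ u₀ + (((ζ a₀ u).re : ℂ) + ((ζ a₀ u).im : ℂ) * Complex.I) := by
      rw [re_add_im]
    _ = _ := by rw [hre u hu]; ring
end

section
/- Let U ⊆ ℂ be a nonempty connected open set and I ⊆ ℝ a nonempty open interval. Let ζ : U × I → ℂ be such that both a ↦ ∂²ζ/∂a²(a,u) and a ↦ ∂²ζ/∂a∂u(a,u) are holomorphic on U for each u ∈ I, with ∂²ζ/∂a²(a,u) ≠ 0 for all (a,u) ∈ U × I. If conj(∂²ζ/∂a²(a,u))·(∂²ζ/∂a∂u(a,u)) − conj(∂²ζ/∂a∂u(a,u))·(∂²ζ/∂a²(a,u)) = 0 for all (a,u) ∈ U × I, then there exists a function F₅ : I → ℝ such that ∂²ζ/∂a∂u(a,u) = F₅(u)·∂²ζ/∂a²(a,u) for all (a,u)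 ∈ U × I. -/
open Complex ComplexConjugate

/- The quotient `f / g` is holomorphic on `U`, and the hypothesis says it is real-valued there;
by the open mapping theorem it is a real constant. -/

theorem Complex.im_div_eq_zero_of_conj_mul_sub_conj_mul_eq_zero {z w : ℂ} (hw : w ≠ 0)
    (h : conj w * z - conj z * w = 0) : (z / w).im = 0 := by
  refine conj_eq_iff_im.mp ?_
  rw [map_div₀, div_eq_div_iff ((map_ne_zero _).mpr hw) hw]
  linear_combination -h

theorem DifferentiableOn.exists_real_mul_of_conj_mul_sub_conj_mul_eq_zero {U : Set ℂ}
    {f g : ℂ → ℂ} (hU : IsOpen U) (hUc : IsConnected U) (hf : DifferentiableOn ℂ f U)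
    (hg : DifferentiableOn ℂ g U) (hg₀ : ∀ z ∈ U, g z ≠ 0)
    (h : ∀ z ∈ U, conj (g z) * f z - conj (f z) * g z = 0) :
    ∃ c : ℝ, ∀ z ∈ U, f z = c * g z := by
  have hquot : AnalyticOnNhd ℂ (fun z => f z / g z) U := (hf.div hg hg₀).analyticOnNhd hU
  obtain ⟨c, hc⟩ := hquot.eq_const_add_im_mul_I_of_re_eq_const
    (fun z hz => im_div_eq_zero_of_conj_mul_sub_conj_mul_eq_zero (hg₀ z hz) (h z hz)) hU hUc
  refine ⟨c, fun z hz => ?_⟩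
  have hcz := hc z hz
  rw [ofReal_zero, zero_mul, add_zero, div_eq_iff (hg₀ z hz)] at hcz
  exact hcz

theorem stmt_7_general (U : Set ℂ) (I : Set ℝ) (hUopen : IsOpen U) (hUconn : IsConnected U)
    (ζaa ζau : ℂ → ℝ → ℂ)
    (holo_aa : ∀ u ∈ I, ∀ a ∈ U, DifferentiableAt ℂ (fun z => ζaa z u) a)
    (holo_au : ∀ u ∈ I, ∀ a ∈ U, DifferentiableAt ℂ (fun z => ζau z u) a)
    (hne : ∀ a ∈ U, ∀ u ∈ I, ζaa a u ≠ 0)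
    (hwedge : ∀ a ∈ U, ∀ u ∈ I,
      (starRingEnd ℂ) (ζaa a u) * ζau a u - (starRingEnd ℂ) (ζau a u) * ζaa a u = 0) :
    ∃ F₅ : ℝ → ℝ, ∀ a ∈ U, ∀ u ∈ I, ζau a u = (F₅ u : ℂ) * ζaa a u := by
  have hslice : ∀ u ∈ I, ∃ c : ℝ, ∀ a ∈ U, ζau a u = c * ζaa a u := fun u hu =>
    DifferentiableOn.exists_real_mul_of_conj_mul_sub_conj_mul_eq_zero hUopen hUconn
      (fun a ha => (holo_au u hu a ha).differentiableWithinAt)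
      (fun a ha => (holo_aa u hu a ha).differentiableWithinAt)
      (fun a ha => hne a ha u hu) (fun a ha => hwedge a ha u hu)
  choose! F₅ hF₅ using hslice
  exact ⟨F₅, fun a ha u hu => hF₅ u hu a ha⟩

/-- Key step of Case 4 of Lemma 4: if `ζ_{,aa}` and `ζ_{,au}` are holomorphic in `a`,
`ζ_{,aa} ≠ 0`, and `conj(ζ_{,aa})ζ_{,au} - conj(ζ_{,au})ζ_{,aa} = 0` on `U × I`,
then `ζ_{,au} = F₅(u)·ζ_{,aa}` for a real-valued function `F₅` of `u` alone. -/
theorem stmt_7 (U : Set ℂ) (I : Set ℝ) (hUopen : IsOpen U) (hUconn : IsConnected U)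
    (hIopen : IsOpen I) (hIne : I.Nonempty) (hIint : I.OrdConnected)
    (ζ ζa ζaa ζau : ℂ → ℝ → ℂ)
    (hζa : ∀ a ∈ U, ∀ u ∈ I, HasDerivAt (fun z => ζ z u) (ζa a u) a)
    (hζaa : ∀ a ∈ U, ∀ u ∈ I, HasDerivAt (fun z => ζa z u) (ζaa a u) a)
    (hζau : ∀ a ∈ U, ∀ u ∈ I, HasDerivAt (fun t => ζa a t) (ζau a u) u)
    (holo_aa : ∀ u ∈ I, ∀ a ∈ U, DifferentiableAt ℂ (fun z => ζaa z u) a)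
    (holo_au : ∀ u ∈ I, ∀ a ∈ U, DifferentiableAt ℂ (fun z => ζau z u) a)
    (hne : ∀ a ∈ U, ∀ u ∈ I, ζaa a u ≠ 0)
    (hwedge : ∀ a ∈ U, ∀ u ∈ I,
      (starRingEnd ℂ) (ζaa a u) * ζau a u - (starRingEnd ℂ) (ζau a u) * ζaa a u = 0) :
    ∃ F₅ : ℝ → ℝ, ∀ a ∈ U, ∀ u ∈ I, ζau a u = (F₅ u : ℂ) * ζaa a u :=
  stmt_7_general U I hUopen hUconn ζaa ζau holo_aa holo_au hne hwedge
end

section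
/- Let I ⊆ ℝ be a nonempty open interval, C₀ ∈ ℝ, and let F_x, F_y, R : I → ℝ be differentiable with F_y(u) > 0 for all u ∈ I. Suppose that for all u ∈ I: (R(u) + (C₀/4)·F_y(u))·F_x'(u) − R'(u)·F_x(u) = 0, (R(u) + (C₀/4)·F_y(u))·F_y'(u) − R'(u)·F_y(u) = 0, and F_y(u)·F_x'(u) − F_y'(u)·F_x(u) = 0. Then there exist real constants C₂ and C₃ such that F_x(u) = C₂·F_y(u) and R(u) = (C₃ + (C₀/4)·ln(F_y(u)))·F_y(u) for all u ∈ I. -/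
/-! Both unknown relations are first integrals: `h3` says the Wronskian of `F_x, F_y` vanishes, so
`F_x / F_y` is constant, and `h2` says exactly that `R / F_y - (C₀/4) log F_y` has zero derivative.
On an interval a function with zero derivative is constant. -/

open Real

theorem IsOpen.exists_eq_const_of_hasDerivAt_zero {s : Set ℝ} (hs : IsOpen s)
    (hs' : IsPreconnected s) {f : ℝ → ℝ} (hf : ∀ x ∈ s, HasDerivAt f 0 x) :
    ∃ a, ∀ x ∈ s, f x = a :=
  hs.exists_is_const_of_deriv_eq_zero hs'
    (fun x hx => (hf x hx).differentiableAt.differentiableWithinAt)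
    (fun x hx => (hf x hx).deriv)

theorem hasDerivAt_div_zero_of_wronskian_eq_zero {f g : ℝ → ℝ} {f' g' x : ℝ}
    (hf : HasDerivAt f f' x) (hg : HasDerivAt g g' x) (hgx : g x ≠ 0)
    (hw : g x * f' - g' * f x = 0) : HasDerivAt (fun y => f y / g y) 0 x := by
  refine (hf.div hg hgx).congr_deriv ?_
  rw [div_eq_zero_iff]
  exact Or.inl (by linear_combination hw)

theorem hasDerivAt_div_sub_mul_log_zero {r g : ℝ → ℝ} {r' g' x : ℝ} (c : ℝ)
    (hr : HasDerivAt r r' x) (hg : HasDerivAt g g' x) (hgx : g x ≠ 0)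
    (h : (r x + c * g x) * g' - r' * g x = 0) :
    HasDerivAt (fun y => r y / g y - c * log (g y)) 0 x := by
  refine ((hr.div hg hgx).sub ((hg.log hgx).const_mul c)).congr_deriv ?_
  field_simp
  linear_combination -h

theorem stmt_10_general (I : Set ℝ) (hIopen : IsOpen I) (hIint : I.OrdConnected)
    (C₀ : ℝ) (Fx Fy R Fx' Fy' R' : ℝ → ℝ)
    (hFx : ∀ u ∈ I, HasDerivAt Fx (Fx' u) u)
    (hFy : ∀ u ∈ I, HasDerivAt Fy (Fy' u) u)
    (hR : ∀ u ∈ I, HasDerivAt R (R' u) u)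
    (hFypos : ∀ u ∈ I, 0 < Fy u)
    (h2 : ∀ u ∈ I, (R u + (C₀/4) * Fy u) * Fy' u - R' u * Fy u = 0)
    (h3 : ∀ u ∈ I, Fy u * Fx' u - Fy' u * Fx u = 0) :
    ∃ C₂ C₃ : ℝ, ∀ u ∈ I,
      Fx u = C₂ * Fy u ∧ R u = (C₃ + (C₀/4) * Real.log (Fy u)) * Fy u := by
  have hne : ∀ u ∈ I, Fy u ≠ 0 := fun u hu => (hFypos u hu).ne'
  obtain ⟨C₂, hC₂⟩ := hIopen.exists_eq_const_of_hasDerivAt_zero hIint.isPreconnected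
    fun u hu => hasDerivAt_div_zero_of_wronskian_eq_zero (hFx u hu) (hFy u hu) (hne u hu) (h3 u hu)
  obtain ⟨C₃, hC₃⟩ := hIopen.exists_eq_const_of_hasDerivAt_zero hIint.isPreconnected
    fun u hu => hasDerivAt_div_sub_mul_log_zero (C₀/4) (hR u hu) (hFy u hu) (hne u hu) (h2 u hu)
  refine ⟨C₂, C₃, fun u hu => ⟨?_, ?_⟩⟩
  · rw [← hC₂ u hu, div_mul_cancel₀ _ (hne u hu)]
  · rw [← hC₃ u hu, sub_add_cancel, div_mul_cancel₀ _ (hne u hu)]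

/-- Solution of the wedge-product ODE system in the branch `F_y ≠ 0`:
`F_x = C₂·F_y` and `R = (C₃ + (C₀/4)·ln F_y)·F_y`. -/
theorem stmt_10 (I : Set ℝ) (hIopen : IsOpen I) (hIne : I.Nonempty) (hIint : I.OrdConnected)
    (C₀ : ℝ) (Fx Fy R Fx' Fy' R' : ℝ → ℝ)
    (hFx : ∀ u ∈ I, HasDerivAt Fx (Fx' u) u)
    (hFy : ∀ u ∈ I, HasDerivAt Fy (Fy' u) u)
    (hR : ∀ u ∈ I, HasDerivAt R (R' u) u)
    (hFypos : ∀ u ∈ I, 0 < Fy u)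
    (h1 : ∀ u ∈ I, (R u + (C₀/4) * Fy u) * Fx' u - R' u * Fx u = 0)
    (h2 : ∀ u ∈ I, (R u + (C₀/4) * Fy u) * Fy' u - R' u * Fy u = 0)
    (h3 : ∀ u ∈ I, Fy u * Fx' u - Fy' u * Fx u = 0) :
    ∃ C₂ C₃ : ℝ, ∀ u ∈ I,
      Fx u = C₂ * Fy u ∧ R u = (C₃ + (C₀/4) * Real.log (Fy u)) * Fy u :=
  stmt_10_general I hIopen hIint C₀ Fx Fy R Fx' Fy' R' hFx hFy hR hFypos h2 h3
end
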